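/- Let m(u) = f + g·u + (1/2)u·H·u + (σ/3)‖u‖³ with σ > 0, H symmetric. If u* is a global minimizer of m over ℝⁿ, then H + σ‖u*‖I ⪰ 0, hence λ_min(H) ≥ −σ‖u*‖. -/

import Mathlib

open Matrix Real BigOperators RealInnerProductSpace

/-- Euclidean norm of a finite-dimensional real vector. -/
noncomputable def eunorm {ι : Type*} [Fintype ι] (x : ι → ℝ) : ℝ :=
  Real.sqrt (∑ i, x i ^ 2)

/-- ℓ¹ norm of a finite-dimensional real vector. -/
noncomputable def l1norm {ι : Type*} [Fintype ι] (x : ι → ℝ) : ℝ :=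
  ∑ i, |x i|

lemma eunorm_eq_sqrt_dot {ι : Type*} [Fintype ι] (x : ι → ℝ) :
    eunorm x = Real.sqrt (x ⬝ᵥ x) := by
  unfold eunorm dotProduct
  congr 1
  exact Finset.sum_congr rfl fun i _ => sq (x i)

lemma dot_self_nonneg {ι : Type*} [Fintype ι] (x : ι → ℝ) : 0 ≤ x ⬝ᵥ x :=
  Finset.sum_nonneg fun i _ => mul_self_nonneg (x i)

lemma eunorm_nonneg {ι : Type*} [Fintype ι] (x : ι → ℝ) : 0 ≤ eunorm x :=
  Real.sqrt_nonneg _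

lemma eunorm_sq {ι : Type*} [Fintype ι] (x : ι → ℝ) : eunorm x ^ 2 = x ⬝ᵥ x := by
  rw [eunorm_eq_sqrt_dot, Real.sq_sqrt (dot_self_nonneg x)]

lemma eunorm_cube {ι : Type*} [Fintype ι] (x : ι → ℝ) :
    eunorm x ^ 3 = (x ⬝ᵥ x) ^ (3 / 2 : ℝ) := by
  rw [eunorm_eq_sqrt_dot, Real.sqrt_eq_rpow, ← Real.rpow_natCast ((x ⬝ᵥ x) ^ (1/2:ℝ)) 3,
    ← Real.rpow_mul (dot_self_nonneg x)]
  norm_num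

/-- cube expansion bound: if `a = sqrt (b^2 + s)` with `b,s ≥ 0` then
`a^3 - b^3 ≤ (3/2) * s * (b + sqrt s)`. -/
lemma rpow_three_halves {c : ℝ} (hc : 0 ≤ c) : c ^ (3 / 2 : ℝ) = Real.sqrt c ^ 3 := by
  rw [Real.sqrt_eq_rpow, ← Real.rpow_natCast (c ^ (1/2:ℝ)) 3, ← Real.rpow_mul hc]
  norm_num

lemma cube_bound {b s : ℝ} (hb : 0 ≤ b) (hs : 0 ≤ s) :
    Real.sqrt (b ^ 2 + s) ^ 3 - b ^ 3 ≤ 3 / 2 * s * (b + Real.sqrt s) := by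
  set a := Real.sqrt (b ^ 2 + s) with ha
  have ha0 : 0 ≤ a := Real.sqrt_nonneg _
  have ha2 : a ^ 2 = b ^ 2 + s := Real.sq_sqrt (by positivity)
  have hab : b ≤ a := by
    nlinarith [Real.sqrt_nonneg (b^2+s)]
  have hsqrt : a ≤ b + Real.sqrt s := by
    have h1 : Real.sqrt s ^ 2 = s := Real.sq_sqrt hs
    have h2 : 0 ≤ Real.sqrt s := Real.sqrt_nonneg s
    nlinarith
  -- a^3 - b^3 ≤ 3/2 * s * a ≤ 3/2 * s * (b + sqrt s)
  have key : a ^ 3 - b ^ 3 ≤ 3 / 2 * s * a := by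
    nlinarith [mul_nonneg (mul_nonneg (sq_nonneg (a - b)) (sub_nonneg.2 hab)) hb,
      sq_nonneg (a - b), mul_nonneg (sq_nonneg (a - b)) hb]
  have := mul_le_mul_of_nonneg_left hsqrt (by positivity : (0:ℝ) ≤ 3 / 2 * s)
  linarith

set_option maxHeartbeats 1600000 in
theorem stmt15 {n : ℕ} (f σ : ℝ) (g ustar : Fin n → ℝ) (H : Matrix (Fin n) (Fin n) ℝ)
    (hH : H.IsSymm) (hσ : 0 < σ)
    (m : (Fin n → ℝ) → ℝ)
    (hm : ∀ d, m d = f + g ⬝ᵥ d + (1 / 2) * (d ⬝ᵥ H.mulVec d) + (σ / 3) * (eunorm d) ^ 3)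
    (hmin : ∀ u : Fin n → ℝ, m ustar ≤ m u) :
    ustar ⬝ᵥ H.mulVec ustar ≥ -(σ * (eunorm ustar) ^ 3) ∧
    ∀ x : Fin n → ℝ, 0 ≤ x ⬝ᵥ H.mulVec x + σ * eunorm ustar * (eunorm x) ^ 2 := by
  have hsymm : ∀ u x : Fin n → ℝ, u ⬝ᵥ H.mulVec x = x ⬝ᵥ H.mulVec u := by
    intro u x
    rw [Matrix.dotProduct_mulVec, ← Matrix.mulVec_transpose, hH.eq, dotProduct_comm]
  set b := eunorm ustar with hbdef
  have hb : 0 ≤ b := eunorm_nonneg _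
  have hb2 : b ^ 2 = ustar ⬝ᵥ ustar := eunorm_sq ustar
  clear_value b
  -- expansion of m along a line
  have hexp : ∀ (x : Fin n → ℝ) (t : ℝ),
      m (ustar + t • x) = (f + g ⬝ᵥ ustar + 1 / 2 * (ustar ⬝ᵥ H.mulVec ustar))
        + t * (g ⬝ᵥ x + ustar ⬝ᵥ H.mulVec x)
        + t ^ 2 * (1 / 2 * (x ⬝ᵥ H.mulVec x))
        + σ / 3 * ((x ⬝ᵥ x) * t ^ 2 + 2 * (ustar ⬝ᵥ x) * t + b ^ 2) ^ (3 / 2 : ℝ) := by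
    intro x t
    rw [hm, eunorm_cube]
    have hdot : (ustar + t • x) ⬝ᵥ (ustar + t • x)
        = (x ⬝ᵥ x) * t ^ 2 + 2 * (ustar ⬝ᵥ x) * t + b ^ 2 := by
      simp [add_dotProduct, dotProduct_add, smul_dotProduct,
        dotProduct_smul, dotProduct_comm x ustar, hb2]
      ring
    have hquad : (ustar + t • x) ⬝ᵥ H.mulVec (ustar + t • x)
        = ustar ⬝ᵥ H.mulVec ustar + 2 * t * (ustar ⬝ᵥ H.mulVec x)
          + t ^ 2 * (x ⬝ᵥ H.mulVec x) := by
      simp [Matrix.mulVec_add, Matrix.mulVec_smul, add_dotProduct,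
        dotProduct_add, smul_dotProduct, dotProduct_smul,
        hsymm x ustar]
      ring
    have hg : g ⬝ᵥ (ustar + t • x) = g ⬝ᵥ ustar + t * (g ⬝ᵥ x) := by
      simp [dotProduct_add, dotProduct_smul]
    rw [hdot, hquad, hg]
    ring
  -- first-order optimality: directional derivative vanishes
  have grad : ∀ x : Fin n → ℝ,
      g ⬝ᵥ x + ustar ⬝ᵥ H.mulVec x + σ * b * (ustar ⬝ᵥ x) = 0 := by
    intro x
    set ψ : ℝ → ℝ := fun t => m (ustar + t • x) with hψ
    have hloc : IsLocalMin ψ 0 := by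
      apply Filter.Eventually.of_forall
      intro t
      have : ψ 0 = m ustar := by simp [hψ]
      rw [this]
      exact hmin _
    have hS : HasDerivAt (fun t : ℝ => (x ⬝ᵥ x) * t ^ 2 + 2 * (ustar ⬝ᵥ x) * t + b ^ 2)
        (2 * (ustar ⬝ᵥ x)) 0 := by
      have h1 : HasDerivAt (fun t : ℝ => (x ⬝ᵥ x) * t ^ 2) ((x ⬝ᵥ x) * (2 * 0 ^ 1)) 0 :=
        (hasDerivAt_pow 2 0).const_mul _
      have h2 : HasDerivAt (fun t : ℝ => 2 * (ustar ⬝ᵥ x) * t) (2 * (ustar ⬝ᵥ x)) 0 := by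
        simpa using (hasDerivAt_id (0:ℝ)).const_mul (2 * (ustar ⬝ᵥ x))
      simpa using (h1.add h2).add_const (b ^ 2)
    have hScube : HasDerivAt
        (fun t : ℝ => ((x ⬝ᵥ x) * t ^ 2 + 2 * (ustar ⬝ᵥ x) * t + b ^ 2) ^ (3 / 2 : ℝ))
        (2 * (ustar ⬝ᵥ x) * (3 / 2) * ((x ⬝ᵥ x) * 0 ^ 2 + 2 * (ustar ⬝ᵥ x) * 0 + b ^ 2)
          ^ ((3 / 2 : ℝ) - 1)) 0 :=
      hS.rpow_const (Or.inr (by norm_num))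
    have hbpow : ((x ⬝ᵥ x) * (0:ℝ) ^ 2 + 2 * (ustar ⬝ᵥ x) * 0 + b ^ 2) ^ ((3 / 2 : ℝ) - 1)
        = b := by
      have : ((x ⬝ᵥ x) * (0:ℝ) ^ 2 + 2 * (ustar ⬝ᵥ x) * 0 + b ^ 2) = b ^ 2 := by ring
      rw [this]
      have : (3 / 2 : ℝ) - 1 = 1 / 2 := by norm_num
      rw [this, ← Real.sqrt_eq_rpow, Real.sqrt_sq hb]
    have hψderiv : HasDerivAt ψ
        (g ⬝ᵥ x + ustar ⬝ᵥ H.mulVec x + σ * b * (ustar ⬝ᵥ x)) 0 := by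
      have heq : ψ = fun t : ℝ => (f + g ⬝ᵥ ustar + 1 / 2 * (ustar ⬝ᵥ H.mulVec ustar))
          + t * (g ⬝ᵥ x + ustar ⬝ᵥ H.mulVec x)
          + t ^ 2 * (1 / 2 * (x ⬝ᵥ H.mulVec x))
          + σ / 3 * ((x ⬝ᵥ x) * t ^ 2 + 2 * (ustar ⬝ᵥ x) * t + b ^ 2) ^ (3 / 2 : ℝ) := by
        funext t; exact hexp x t
      rw [heq]
      have h1 : HasDerivAt (fun t : ℝ => t * (g ⬝ᵥ x + ustar ⬝ᵥ H.mulVec x))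
          (g ⬝ᵥ x + ustar ⬝ᵥ H.mulVec x) 0 := by
        simpa using (hasDerivAt_id (0:ℝ)).mul_const (g ⬝ᵥ x + ustar ⬝ᵥ H.mulVec x)
      have h2 : HasDerivAt (fun t : ℝ => t ^ 2 * (1 / 2 * (x ⬝ᵥ H.mulVec x)))
          ((2 * 0 ^ 1) * (1 / 2 * (x ⬝ᵥ H.mulVec x))) 0 :=
        (hasDerivAt_pow 2 0).mul_const _
      have h3 := (hScube.const_mul (σ / 3))
      have := (((h1.const_add (f + g ⬝ᵥ ustar + 1 / 2 * (ustar ⬝ᵥ H.mulVec ustar))).add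
        h2).add h3)
      refine this.congr_deriv ?_
      rw [hbpow]
      ring
    have := hloc.hasDerivAt_eq_zero hψderiv
    linarith [this]
  -- the main second-order-type inequality
  have main : ∀ x : Fin n → ℝ, 0 ≤ x ⬝ᵥ H.mulVec x + σ * b * (eunorm x) ^ 2 := by
    intro x
    by_cases hx0 : x = 0
    · simp [hx0, eunorm, Real.sqrt_zero]
    have hq : 0 < x ⬝ᵥ x := by
      rcases lt_or_eq_of_le (dot_self_nonneg x) with h | h
      · exact h
      · exfalso; apply hx0
        funext i
        have : ∑ i, x i * x i = 0 := h.symm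
        have hz := (Finset.sum_eq_zero_iff_of_nonneg
          (fun i _ => mul_self_nonneg (x i))).1 this i (Finset.mem_univ i)
        simpa using mul_self_eq_zero.mp hz
    set p := ustar ⬝ᵥ x with hp
    set q := x ⬝ᵥ x with hqdef
    have hqn : q = eunorm x ^ 2 := (eunorm_sq x).symm
    clear_value p q
    by_cases hpz : p = 0
    · -- use the line u* + t x and the cube bound, letting t → 0⁺
      have key : ∀ t : ℝ, 0 < t →
          0 ≤ x ⬝ᵥ H.mulVec x + σ * b * q + σ * q * Real.sqrt q * t := by
        intro t ht
        have h0 := hmin (ustar + t • x)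
        rw [hexp x t] at h0
        have hA : g ⬝ᵥ x + ustar ⬝ᵥ H.mulVec x = 0 := by
          have := grad x
          rw [← hp, hpz] at this
          linarith
        have hrw : (x ⬝ᵥ x * t ^ 2 + 2 * ustar ⬝ᵥ x * t + b ^ 2) ^ (3 / 2 : ℝ)
            = Real.sqrt (b ^ 2 + q * t ^ 2) ^ 3 := by
          have h1 : x ⬝ᵥ x * t ^ 2 + 2 * ustar ⬝ᵥ x * t + b ^ 2 = b ^ 2 + q * t ^ 2 := by
            rw [← hp, ← hqdef] at *
            rw [hpz]; ring
          rw [h1, rpow_three_halves (by positivity)]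
        rw [hrw, hA] at h0
        have hm0 : m ustar = (f + g ⬝ᵥ ustar + 1 / 2 * (ustar ⬝ᵥ H.mulVec ustar))
            + σ / 3 * b ^ 3 := by
          rw [hm ustar, ← hbdef]
        rw [hm0] at h0
        have hcb := cube_bound hb (show (0:ℝ) ≤ q * t ^ 2 by positivity)
        have hst : Real.sqrt (q * t ^ 2) = Real.sqrt q * t := by
          rw [Real.sqrt_mul (le_of_lt hq), Real.sqrt_sq (le_of_lt ht)]
        rw [hst] at hcb
        have h2 : 0 ≤ t ^ 2 * (1 / 2 * (x ⬝ᵥ H.mulVec x))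
            + σ / 3 * (Real.sqrt (b ^ 2 + q * t ^ 2) ^ 3 - b ^ 3) := by linarith
        have h3 : σ / 3 * (Real.sqrt (b ^ 2 + q * t ^ 2) ^ 3 - b ^ 3)
            ≤ σ / 3 * (3 / 2 * (q * t ^ 2) * (b + Real.sqrt q * t)) :=
          mul_le_mul_of_nonneg_left hcb (by positivity)
        have h4 : 0 ≤ t ^ 2 * (1 / 2 * (x ⬝ᵥ H.mulVec x))
            + σ / 2 * (q * t ^ 2) * (b + Real.sqrt q * t) := by nlinarith
        have ht2 : 0 < t ^ 2 := by positivity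
        nlinarith [h4]
      by_contra hcon
      push_neg at hcon
      rw [← hqn] at hcon
      set c := x ⬝ᵥ H.mulVec x + σ * b * q with hc
      have hd : 0 < σ * q * Real.sqrt q := by positivity
      have ht : (0:ℝ) < -c / (2 * (σ * q * Real.sqrt q)) := by
        apply div_pos (by linarith) (by linarith)
      have := key _ ht
      have hval : σ * q * Real.sqrt q * (-c / (2 * (σ * q * Real.sqrt q))) = -c / 2 := by
        field_simp
      rw [hval] at this
      linarith
    · -- reflection: w = u* + s x with s = -2p/q has the same norm as u*
      set s : ℝ := -2 * p / q with hs
      clear_value s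
      have hsq : s * q = -2 * p := by rw [hs]; field_simp
      have h0 := hmin (ustar + s • x)
      rw [hexp x s] at h0
      have hm0 : m ustar = (f + g ⬝ᵥ ustar + 1 / 2 * (ustar ⬝ᵥ H.mulVec ustar))
          + σ / 3 * (b ^ 2) ^ (3 / 2 : ℝ) := by
        rw [hm ustar, eunorm_cube, ← hb2]
      have hcube : (q * s ^ 2 + 2 * p * s + b ^ 2) = b ^ 2 := by
        have : q * s ^ 2 + 2 * p * s = s * (s * q) + 2 * p * s := by ring
        rw [this, hsq]; ring
      rw [← hp, ← hqdef] at h0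
      rw [hcube] at h0
      rw [hm0] at h0
      have h1 : 0 ≤ s * (g ⬝ᵥ x + ustar ⬝ᵥ H.mulVec x) + s ^ 2 * (1 / 2 * (x ⬝ᵥ H.mulVec x)) := by
        linarith
      have hA : g ⬝ᵥ x + ustar ⬝ᵥ H.mulVec x = -(σ * b * p) := by
        have := grad x
        rw [← hp] at this
        linarith
      rw [hA] at h1
      have hs0 : s ≠ 0 := by
        simp only [hs, ne_eq, div_eq_zero_iff]
        push_neg
        constructor
        · intro h; exact hpz (by linarith)
        · exact ne_of_gt hq
      have hps : p = -(s * q) / 2 := by rw [hsq]; ring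
      have h2 : 0 ≤ s ^ 2 * (σ * b * q / 2) + s ^ 2 * (1 / 2 * (x ⬝ᵥ H.mulVec x)) := by
        have : s * -(σ * b * p) = s ^ 2 * (σ * b * q / 2) := by
          rw [hps]; ring
        linarith [this, h1]
      have hs2 : 0 < s ^ 2 := by positivity
      have h2' : 0 ≤ s ^ 2 * (σ * b * q / 2 + 1 / 2 * (x ⬝ᵥ H.mulVec x)) := by linarith
      have hA2 : 0 ≤ σ * b * q / 2 + 1 / 2 * (x ⬝ᵥ H.mulVec x) := by
        by_contra hA3
        push_neg at hA3
        have := mul_neg_of_pos_of_neg hs2 hA3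
        linarith
      rw [← hqn]
      linarith
  constructor
  · have h := main ustar
    rw [← hbdef] at h
    have h3 : σ * b * b ^ 2 = σ * b ^ 3 := by ring
    linarith
  · intro x
    exact main x
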